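/- Monotonicity of the candidate indicator in one's own value (truthfulness core): fix r ∈ [0,1), a permutation π of {1,…,n}, a bidder i, and positive reals ℓ_j for each j ≠ i. If 0 < w ≤ w′ and for every j ≠ i it holds that f_r(w) >_π f_r(ℓ_j) (with the left value associated to bidder i and the right to bidder j), then also f_r(w′) >_π f_r(ℓ_j) for every j ≠ i. -/

import Mathlib

/-
Rounding down to the grid `{2^(r+k) : k ∈ ℤ}` is monotone, so raising one's own value can only
raise `f_r(w)`; a strict win stays strict, and a tie either becomes a strict win or stays a tie
broken by the same priority `π`.
-/

/-- Random rounding-down function: `f_r(w) = 2^(r+k)` for the unique `k ∈ ℤ` with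
`2^(r+k) ≤ w < 2^(r+k+1)`. -/
noncomputable def fr (r w : ℝ) : ℝ := (2 : ℝ) ^ (r + (⌊Real.logb 2 w - r⌋ : ℝ))

/-- Lexicographic tie-breaking: `a >_π b`, where `a` is associated with bidder `i`
and `b` with bidder `j`, holds if `a > b`, or `a = b` and `π(i) > π(j)`. -/
def lexGt {n : ℕ} (π : Equiv.Perm (Fin n)) (i j : Fin n) (a b : ℝ) : Prop :=
  b < a ∨ (a = b ∧ π j < π i)

theorem fr_mono (r : ℝ) : MonotoneOn (fr r) (Set.Ioi 0) := by
  intro w hw w' _ hww'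
  have hlog : Real.logb 2 w ≤ Real.logb 2 w' := Real.logb_le_logb_of_le one_lt_two hw hww'
  have hfloor : ⌊Real.logb 2 w - r⌋ ≤ ⌊Real.logb 2 w' - r⌋ :=
    Int.floor_mono (sub_le_sub_right hlog r)
  exact Real.rpow_le_rpow_of_exponent_le one_le_two
    (add_le_add_right (Int.cast_le.mpr hfloor) r)

theorem lexGt.of_le_left {n : ℕ} {π : Equiv.Perm (Fin n)} {i j : Fin n} {a a' b : ℝ}
    (h : lexGt π i j a b) (ha : a ≤ a') : lexGt π i j a' b := by
  rcases h with hlt | ⟨rfl, hπ⟩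
  · exact Or.inl (hlt.trans_le ha)
  · rcases ha.lt_or_eq with hlt | rfl
    · exact Or.inl hlt
    · exact Or.inr ⟨rfl, hπ⟩

theorem candidate_monotone_in_value_general {n : ℕ}
    (r : ℝ)
    (π : Equiv.Perm (Fin n)) (i : Fin n)
    (ℓ : Fin n → ℝ)
    (w w' : ℝ) (hw : 0 < w) (hww' : w ≤ w')
    (h : ∀ j, j ≠ i → lexGt π i j (fr r w) (fr r (ℓ j))) :
    ∀ j, j ≠ i → lexGt π i j (fr r w') (fr r (ℓ j)) := fun j hj =>
  (h j hj).of_le_left (fr_mono r hw (hw.trans_le hww') hww')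

/-- Monotonicity of the candidate indicator in one's own value (truthfulness core). -/
theorem candidate_monotone_in_value {n : ℕ}
    (r : ℝ) (hr : r ∈ Set.Ico (0:ℝ) 1)
    (π : Equiv.Perm (Fin n)) (i : Fin n)
    (ℓ : Fin n → ℝ) (hℓ : ∀ j, j ≠ i → 0 < ℓ j)
    (w w' : ℝ) (hw : 0 < w) (hww' : w ≤ w')
    (h : ∀ j, j ≠ i → lexGt π i j (fr r w) (fr r (ℓ j))) :
    ∀ j, j ≠ i → lexGt π i j (fr r w') (fr r (ℓ j)) :=
  candidate_monotone_in_value_general r π i ℓ w w' hw hww' h
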